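/- If the edges of a complete bipartite graph H are 2-coloured and the colouring is not split, then one of the two colours has exactly one non-trivial monochromatic component. -/

import Mathlib

open SimpleGraph

/-- The simple graph on `α ⊕ β` whose edges are the colour-`c` edges of the
(not necessarily proper) edge-colouring `χ` of the complete bipartite graph
with biparts `α` and `β`. -/
def colourGraph {α β : Type} {r : ℕ} (χ : α → β → Fin r) (c : Fin r) :
    SimpleGraph (α ⊕ β) where
  Adj x y := ∃ a b, χ a b = c ∧
    ((x = Sum.inl a ∧ y = Sum.inr b) ∨ (x = Sum.inr b ∧ y = Sum.inl a))
  symm := by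
    refine ⟨?_⟩
    rintro x y ⟨a, b, hc, h | h⟩
    · exact ⟨a, b, hc, Or.inr ⟨h.2, h.1⟩⟩
    · exact ⟨a, b, hc, Or.inl ⟨h.2, h.1⟩⟩
  loopless := by
    refine ⟨?_⟩
    rintro x ⟨a, b, hc, ⟨h1, h2⟩ | ⟨h1, h2⟩⟩ <;> simp_all

/-- A monochromatic component is non-trivial if it meets both biparts. -/
def Nontriv {α β : Type} {r : ℕ} (χ : α → β → Fin r) (c : Fin r)
    (K : (colourGraph χ c).ConnectedComponent) : Prop :=
  (∃ a : α, Sum.inl a ∈ K.supp) ∧ (∃ b : β, Sum.inr b ∈ K.supp)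

/-- A 2-edge-colouring of a complete bipartite graph is split if all
monochromatic components are non-trivial and each colour has exactly two
monochromatic components. -/
def IsSplit {α β : Type} (χ : α → β → Fin 2) : Prop :=
  (∀ (c : Fin 2) (K : (colourGraph χ c).ConnectedComponent), Nontriv χ c K) ∧
  (∀ c : Fin 2, Nat.card ((colourGraph χ c).ConnectedComponent) = 2)


/-! Suppose no colour has exactly one non-trivial component. Colour `0` has a non-trivial
component, for otherwise every edge has colour `1` and colour `1` is connected; so it has two,
`K₁ ∋ a₁, b₁` and `K₂ ∋ a₂, b₂`. Every edge between different colour-`0` components has colour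
`1`, so each vertex lies in the colour-`1` component of `a₁b₂` or of `a₂b₁`, and these are distinct
because colour `1` does not have a unique non-trivial component. Running the same argument with
the colours swapped shows that both colours have exactly two components, both non-trivial: the
colouring is split. -/

section

variable {α β : Type} {r : ℕ} (χ : α → β → Fin r)

lemma colourGraph_adj_inl_inr {c : Fin r} {a : α} {b : β} :
    (colourGraph χ c).Adj (Sum.inl a) (Sum.inr b) ↔ χ a b = c := by
  constructor
  · rintro ⟨a', b', hc, ⟨h1, h2⟩ | ⟨h1, h2⟩⟩ <;> simp_all
  · exact fun h => ⟨a, b, h, Or.inl ⟨rfl, rfl⟩⟩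

variable {χ}

lemma connectedComponentMk_inl_eq_inr {c : Fin r} {a : α} {b : β} (h : χ a b = c) :
    (colourGraph χ c).connectedComponentMk (Sum.inl a) =
      (colourGraph χ c).connectedComponentMk (Sum.inr b) :=
  ConnectedComponent.sound ((colourGraph_adj_inl_inr χ).2 h).reachable

lemma nontriv_connectedComponentMk {c : Fin r} {a : α} {b : β} (h : χ a b = c) :
    Nontriv χ c ((colourGraph χ c).connectedComponentMk (Sum.inl a)) :=
  ⟨⟨a, rfl⟩, b, (connectedComponentMk_inl_eq_inr h).symm⟩

lemma ne_of_forall_not_nontriv {c : Fin r} (h : ∀ K, ¬ Nontriv χ c K) (a : α) (b : β) :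
    χ a b ≠ c :=
  fun hab => h _ (nontriv_connectedComponentMk hab)

lemma colourGraph_preconnected_of_forall_eq {c : Fin r} [Nonempty α] [Nonempty β]
    (h : ∀ a b, χ a b = c) : (colourGraph χ c).Preconnected := by
  obtain ⟨a₀⟩ := ‹Nonempty α›
  obtain ⟨b₀⟩ := ‹Nonempty β›
  have hmk : ∀ v, (colourGraph χ c).connectedComponentMk v =
      (colourGraph χ c).connectedComponentMk (Sum.inr b₀) := by
    rintro (a | b)
    · exact connectedComponentMk_inl_eq_inr (h a b₀)
    · rw [← connectedComponentMk_inl_eq_inr (h a₀ b), connectedComponentMk_inl_eq_inr (h a₀ b₀)]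
  exact fun u v => ConnectedComponent.exact ((hmk u).trans (hmk v).symm)

lemma existsUnique_nontriv_of_forall_eq {c : Fin r} [Nonempty α] [Nonempty β]
    (h : ∀ a b, χ a b = c) : ∃! K, Nontriv χ c K := by
  obtain ⟨a₀⟩ := ‹Nonempty α›
  obtain ⟨b₀⟩ := ‹Nonempty β›
  have := (colourGraph_preconnected_of_forall_eq h).subsingleton_connectedComponent
  exact ⟨_, nontriv_connectedComponentMk (h a₀ b₀), fun _ _ => Subsingleton.elim _ _⟩

end

section TwoColours

variable {α β : Type} {χ : α → β → Fin 2} {c d : Fin 2}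

lemma connectedComponentMk_inl_eq_inr_of_ne (hcd : c ≠ d) {a : α} {b : β}
    (h : (colourGraph χ c).connectedComponentMk (Sum.inl a) ≠
      (colourGraph χ c).connectedComponentMk (Sum.inr b)) :
    (colourGraph χ d).connectedComponentMk (Sum.inl a) =
      (colourGraph χ d).connectedComponentMk (Sum.inr b) := by
  have hc : χ a b ≠ c := fun hab => h (connectedComponentMk_inl_eq_inr hab)
  exact connectedComponentMk_inl_eq_inr (by omega)

lemma exists_nontriv_pair_eq_univ (hcd : c ≠ d) {K₁ K₂ : (colourGraph χ c).ConnectedComponent}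
    (hK : K₁ ≠ K₂) (h₁ : Nontriv χ c K₁) (h₂ : Nontriv χ c K₂) :
    ∃ C C' : (colourGraph χ d).ConnectedComponent,
      Nontriv χ d C ∧ Nontriv χ d C' ∧ {C, C'} = Set.univ := by
  obtain ⟨⟨a₁, ha₁⟩, b₁, hb₁⟩ := h₁
  obtain ⟨⟨a₂, ha₂⟩, b₂, hb₂⟩ := h₂
  rw [ConnectedComponent.mem_supp_iff] at ha₁ hb₁ ha₂ hb₂
  have cross := @connectedComponentMk_inl_eq_inr_of_ne _ _ χ c d hcd
  have hC := cross (a := a₁) (b := b₂) (by rw [ha₁, hb₂]; exact hK)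
  have hC' := cross (a := a₂) (b := b₁) (by rw [ha₂, hb₁]; exact hK.symm)
  refine ⟨_, _, ⟨⟨a₁, hC⟩, b₂, rfl⟩, ⟨⟨a₂, hC'⟩, b₁, rfl⟩, Set.eq_univ_of_forall ?_⟩
  refine ConnectedComponent.ind ?_
  rintro (a | b)
  · by_cases ha : (colourGraph χ c).connectedComponentMk (Sum.inl a) = K₁
    · exact Or.inl (cross (by rw [ha, hb₂]; exact hK))
    · exact Or.inr (cross (by rwa [hb₁]))
  · by_cases hb : (colourGraph χ c).connectedComponentMk (Sum.inr b) = K₁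
    · exact Or.inr ((cross (by rw [ha₂, hb]; exact hK.symm)).symm.trans hC')
    · exact Or.inl ((cross (by rw [ha₁]; exact Ne.symm hb)).symm.trans hC)

lemma isSplit_of_forall_exists (h : ∀ c, ∃ K K' : (colourGraph χ c).ConnectedComponent,
    K ≠ K' ∧ Nontriv χ c K ∧ Nontriv χ c K' ∧ {K, K'} = Set.univ) : IsSplit χ := by
  refine ⟨fun c L => ?_, fun c => ?_⟩
  · obtain ⟨K, K', -, hK, hK', huniv⟩ := h c
    rcases Set.eq_univ_iff_forall.1 huniv L with rfl | rfl
    exacts [hK, hK']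
  · obtain ⟨K, K', hne, -, -, huniv⟩ := h c
    exact Nat.card_eq_two_iff.2 ⟨K, K', hne, huniv⟩

end TwoColours

theorem exists_colour_with_unique_nontrivial_component_general
    {α β : Type} [Nonempty α] [Nonempty β]
    (χ : α → β → Fin 2) (hns : ¬ IsSplit χ) :
    ∃ c : Fin 2, ∃! K : (colourGraph χ c).ConnectedComponent, Nontriv χ c K := by
  by_contra! h
  obtain ⟨K₁, hK₁⟩ : ∃ K, Nontriv χ 0 K := by
    by_contra! h₀
    exact h 1 (existsUnique_nontriv_of_forall_eq fun a b => by
      have := ne_of_forall_not_nontriv h₀ a b; omega)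
  obtain ⟨K₂, hK₂, hK⟩ : ∃ K, Nontriv χ 0 K ∧ K ≠ K₁ := by
    by_contra! h'
    exact h 0 ⟨K₁, hK₁, h'⟩
  obtain ⟨C, C', hC, hC', hCuniv⟩ := exists_nontriv_pair_eq_univ (d := 1) (by decide) hK hK₂ hK₁
  have hCC : C ≠ C' := by
    rintro rfl
    exact h 1 ⟨C, hC, fun L _ => (Set.eq_univ_iff_forall.1 hCuniv L).elim id id⟩
  obtain ⟨R, R', hR, hR', hRuniv⟩ := exists_nontriv_pair_eq_univ (d := 0) (by decide) hCC hC hC'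
  have hRR : R ≠ R' := by
    rintro rfl
    have hR_all : ∀ L, L = R := fun L => (Set.eq_univ_iff_forall.1 hRuniv L).elim id id
    exact hK ((hR_all K₂).trans (hR_all K₁).symm)
  exact hns (isSplit_of_forall_exists (Fin.forall_fin_two.2
    ⟨⟨R, R', hRR, hR, hR', hRuniv⟩, ⟨C, C', hCC, hC, hC', hCuniv⟩⟩))

/-- If a 2-edge-colouring of a complete bipartite graph is not split, then
some colour has exactly one non-trivial monochromatic component. -/
theorem exists_colour_with_unique_nontrivial_component
    {α β : Type} [Fintype α] [Fintype β] [Nonempty α] [Nonempty β]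
    (χ : α → β → Fin 2) (hns : ¬ IsSplit χ) :
    ∃ c : Fin 2, ∃! K : (colourGraph χ c).ConnectedComponent, Nontriv χ c K :=
  exists_colour_with_unique_nontrivial_component_general χ hns
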